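/- Let g > 0 and α_n = min{1, g/n^2}, and let L_n = n+1-K_n. Then E[L_n] = g ln n + O(1) as n → ∞. -/

import Mathlib

open Finset Filter

/-- The law of the snapshot chain `K_n` with reset probabilities `a`:
`p n k = P[K_n = k]`, with `K_1 = 1` a.s., support `{1,…,n}`,
`P[K_{n+1} = 1] = a (n+1)` and `P[K_{n+1} = k+1] = (1 - a (n+1)) * P[K_n = k]`. -/
def IsSnapshotLaw (a : ℕ → ℝ) (p : ℕ → ℕ → ℝ) : Prop :=
  p 1 1 = 1 ∧
  (∀ n k, 1 ≤ n → (k = 0 ∨ n < k) → p n k = 0) ∧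
  (∀ n : ℕ, 1 ≤ n → p (n + 1) 1 = a (n + 1)) ∧
  (∀ n k, 1 ≤ n → 1 ≤ k → k ≤ n → p (n + 1) (k + 1) = (1 - a (n + 1)) * p n k)

/-- `E[K_n]` for the snapshot chain with law `p`. -/
noncomputable def snapExp (p : ℕ → ℕ → ℝ) (n : ℕ) : ℝ :=
  ∑ k ∈ Finset.Icc 1 n, (k : ℝ) * p n k

lemma snap_step {a : ℕ → ℝ} {p : ℕ → ℕ → ℝ} (hp : IsSnapshotLaw a p)
    (f : ℕ → ℝ) {n : ℕ} (hn : 1 ≤ n) :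
    ∑ k ∈ Icc 1 (n+1), f k * p (n+1) k
      = f 1 * a (n+1) + (1 - a (n+1)) * ∑ k ∈ Icc 1 n, f (k+1) * p n k := by
  obtain ⟨h1, h0, hr, hs⟩ := hp
  have h1mem : 1 ∈ Icc 1 (n+1) := by simp
  rw [← Finset.add_sum_erase _ _ h1mem, Finset.Icc_erase_left, ← Finset.Icc_add_one_left_eq_Ioc,
    hr n hn]
  congr 1
  have hmap : Icc (Nat.succ 1) (n+1) = (Icc 1 n).map (addRightEmbedding 1) := by
    rw [Finset.map_add_right_Icc]
  rw [← Nat.succ_eq_add_one 1, hmap, Finset.sum_map, Finset.mul_sum]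
  refine Finset.sum_congr rfl ?_
  intro k hk
  simp only [Finset.mem_Icc] at hk
  have : addRightEmbedding 1 k = k + 1 := rfl
  rw [this, hs n k hn hk.1 hk.2]
  ring

lemma sum_p_one {a : ℕ → ℝ} {p : ℕ → ℕ → ℝ} (hp : IsSnapshotLaw a p) :
    ∀ n : ℕ, 1 ≤ n → ∑ k ∈ Icc 1 n, p n k = 1 := by
  intro n hn
  induction n, hn using Nat.le_induction with
  | base => simpa using hp.1
  | succ n hn ih =>
    have := snap_step hp (fun _ => 1) hn
    simp only [one_mul] at this
    rw [this, ih]; ring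

lemma snapExp_succ {a : ℕ → ℝ} {p : ℕ → ℕ → ℝ} (hp : IsSnapshotLaw a p)
    {n : ℕ} (hn : 1 ≤ n) :
    snapExp p (n+1) = 1 + (1 - a (n+1)) * snapExp p n := by
  have h := snap_step hp (fun k => (k : ℝ)) hn
  simp only [Nat.cast_add, Nat.cast_one, one_mul] at h
  have hsum : ∑ k ∈ Icc 1 n, ((k : ℝ) + 1) * p n k
      = snapExp p n + ∑ k ∈ Icc 1 n, p n k := by
    rw [snapExp, ← Finset.sum_add_distrib]
    refine Finset.sum_congr rfl fun k _ => by ring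
  rw [snapExp, h, hsum, sum_p_one hp n hn]
  ring


lemma snap_aux_key (g B M lg s t : ℝ) (hg : 0 < g) (hB1 : 1 ≤ B)
    (hM : M = 4*g + 4*g^2 + 2*g*B) (hs1 : 1 ≤ s) (hst : s ≤ t)
    (ht2 : t^2 = s^2 + 1) (hlg0 : 0 ≤ lg) (hlgs : lg ≤ 2*s) :
    g/(s^2*t^2) + g*(g*lg + B)/(t^2)^2 ≤ M * (1/s - 1/t) := by
  have ht1 : 1 ≤ t := le_trans hs1 hst
  have hs0 : (0:ℝ) < s := by linarith
  have ht0 : (0:ℝ) < t := by linarith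
  have hM0 : 0 ≤ M := by nlinarith
  have hfrac : 1/s - 1/t = 1/(s*t*(s+t)) := by
    have hts : (t - s) * (s + t) = 1 := by nlinarith
    field_simp
    nlinarith [hts, mul_pos hs0 ht0]
  have hden : s*t*(s+t) ≤ 2*t^3 := by nlinarith
  have h1 : M * (1/(2*t^3)) ≤ M * (1/(s*t*(s+t))) :=
    mul_le_mul_of_nonneg_left
      (one_div_le_one_div_of_le (by positivity) hden) hM0
  have hts2 : t^2 ≤ 2*s^2 := by nlinarith
  have e1 : g/(s^2*t^2) ≤ 2*g/t^4 := by
    rw [div_le_div_iff₀ (by positivity) (by positivity)]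
    nlinarith [mul_le_mul_of_nonneg_left hts2 (by positivity : (0:ℝ) ≤ g*t^2)]
  have e2 : g*(g*lg + B)/(t^2)^2 ≤ (2*g^2*t + g*B)/t^4 := by
    rw [show ((t:ℝ)^2)^2 = t^4 by ring]
    apply div_le_div_of_nonneg_right _ (by positivity)
    nlinarith [mul_le_mul_of_nonneg_left hlgs (by positivity : (0:ℝ) ≤ g^2)]
  have e3 : 2*g/t^4 + (2*g^2*t + g*B)/t^4 ≤ (2*g + 2*g^2 + g*B)/t^3 := by
    rw [← add_div, div_le_div_iff₀ (by positivity) (by positivity)]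
    nlinarith [mul_le_mul_of_nonneg_left ht1 (by positivity : (0:ℝ) ≤ 2*g*t^3),
      mul_le_mul_of_nonneg_left ht1 (by positivity : (0:ℝ) ≤ g*B*t^3)]
  have e4 : (2*g + 2*g^2 + g*B)/t^3 = M * (1/(2*t^3)) := by
    rw [hM]; field_simp; ring
  rw [hfrac]
  linarith

set_option maxHeartbeats 2000000 in
theorem snapshot_quadratic_case (g : ℝ) (hg : 0 < g)
    (a : ℕ → ℝ) (p : ℕ → ℕ → ℝ)
    (ha : ∀ n, a n = min 1 (g / (n : ℝ) ^ 2))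
    (hp : IsSnapshotLaw a p) :
    ∃ C : ℝ, ∀ n : ℕ, 1 ≤ n →
      |((n : ℝ) + 1 - snapExp p n) - g * Real.log n| ≤ C := by
  obtain ⟨L, hL⟩ : ∃ L : ℕ → ℝ, ∀ n : ℕ, L n = (n : ℝ) + 1 - snapExp p n :=
    ⟨fun n => (n : ℝ) + 1 - snapExp p n, fun _ => rfl⟩
  -- basic facts about a
  have ha_nonneg : ∀ n : ℕ, 1 ≤ n → 0 ≤ a n := by
    intro n hn
    rw [ha]
    have : (0:ℝ) < (n:ℝ)^2 := by positivity
    positivity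
  have ha_le_one : ∀ n : ℕ, a n ≤ 1 := fun n => by rw [ha]; exact min_le_left _ _
  -- recurrence for L
  have hL1 : L 1 = 1 := by
    have : snapExp p 1 = 1 := by
      rw [snapExp]
      simpa using hp.1
    rw [hL]
    simp [this]
  have hLrec : ∀ n : ℕ, 1 ≤ n →
      L (n+1) = (1 - a (n+1)) * L n + a (n+1) * ((n:ℝ)+1) := by
    intro n hn
    rw [hL, hL, snapExp_succ hp hn]
    push_cast
    ring
  -- range bounds: 1 ≤ L n ≤ n
  have hLrange : ∀ n : ℕ, 1 ≤ n → 1 ≤ L n ∧ L n ≤ (n : ℝ) := by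
    intro n hn
    induction n, hn using Nat.le_induction with
    | base => rw [hL1]; norm_num
    | succ n hn ih =>
      have h0 := ha_nonneg (n+1) (by omega)
      have h1 := ha_le_one (n+1)
      rw [hLrec n hn]
      push_cast
      constructor
      · nlinarith [ih.1]
      · nlinarith [ih.2]
  -- key log inequalities
  have hlog_diff_ge : ∀ n : ℕ, 1 ≤ n →
      1 / ((n:ℝ)+1) ≤ Real.log ((n:ℝ)+1) - Real.log n := by
    intro n hn
    have hn0 : (0:ℝ) < n := by exact_mod_cast hn
    have hx : (0:ℝ) < ((n:ℝ)+1)/n := by positivity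
    have := Real.one_sub_inv_le_log_of_pos hx
    rw [Real.log_div (by positivity) (by positivity)] at this
    have hinv : (((n:ℝ)+1)/n)⁻¹ = (n:ℝ)/((n:ℝ)+1) := by
      rw [inv_div]
    rw [hinv] at this
    have : 1 - (n:ℝ)/((n:ℝ)+1) = 1/((n:ℝ)+1) := by
      field_simp
      ring
    linarith [Real.one_sub_inv_le_log_of_pos hx, this]
  have hlog_diff_le : ∀ n : ℕ, 1 ≤ n →
      Real.log ((n:ℝ)+1) - Real.log n ≤ 1 / n := by
    intro n hn
    have hn0 : (0:ℝ) < n := by exact_mod_cast hn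
    have hx : (0:ℝ) < ((n:ℝ)+1)/n := by positivity
    have h := Real.log_le_sub_one_of_pos hx
    rw [Real.log_div (by positivity) (by positivity)] at h
    have : ((n:ℝ)+1)/n - 1 = 1/n := by field_simp; ring
    linarith
  have hlog_le_sqrt : ∀ n : ℕ, 1 ≤ n → Real.log n ≤ 2 * Real.sqrt n := by
    intro n hn
    have hn0 : (0:ℝ) < n := by exact_mod_cast hn
    have h1 : Real.log (Real.sqrt n) ≤ Real.sqrt n - 1 :=
      Real.log_le_sub_one_of_pos (Real.sqrt_pos.mpr hn0)
    have h2 : Real.log (Real.sqrt n) = Real.log n / 2 := Real.log_sqrt hn0.le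
    linarith
  have hlog_nonneg : ∀ n : ℕ, 1 ≤ n → 0 ≤ Real.log n := by
    intro n hn
    exact Real.log_nonneg (by exact_mod_cast hn)
  -- constants
  obtain ⟨B, hB⟩ : ∃ B : ℝ, B = Real.sqrt g + 1 := ⟨_, rfl⟩
  have hB1 : 1 ≤ B := by
    have : 0 ≤ Real.sqrt g := Real.sqrt_nonneg g
    linarith
  obtain ⟨M, hM⟩ : ∃ M : ℝ, M = 4*g + 4*g^2 + 2*g*B := ⟨_, rfl⟩
  have hM0 : 0 ≤ M := by rw [hM]; nlinarith
  obtain ⟨C, hC⟩ : ∃ C : ℝ, C = g * Real.log (Real.sqrt g + 1) + M := ⟨_, rfl⟩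
  have hC0 : 0 ≤ C := by
    have : 0 ≤ Real.log (Real.sqrt g + 1) :=
      Real.log_nonneg (by linarith [Real.sqrt_nonneg g])
    rw [hC]
    nlinarith
  -- upper bound
  have hupper : ∀ n : ℕ, 1 ≤ n → L n ≤ g * Real.log n + B := by
    intro n hn
    induction n, hn using Nat.le_induction with
    | base =>
      rw [hL1]
      simp only [Nat.cast_one, Real.log_one, mul_zero, zero_add]
      rw [hB]
      linarith [Real.sqrt_nonneg g]
    | succ n hn ih =>
      have hN0 : (0:ℝ) < (n:ℝ)+1 := by positivity
      have hN2 : (0:ℝ) < ((n:ℝ)+1)^2 := by positivity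
      rcases le_total g (((n:ℝ)+1)^2) with hcase | hcase
      · -- a (n+1) = g/(n+1)^2
        have haval : a (n+1) = g / ((n:ℝ)+1)^2 := by
          rw [ha]
          push_cast
          exact min_eq_right (by rw [div_le_one hN2]; exact hcase)
        have hann : 0 ≤ g / ((n:ℝ)+1)^2 := by positivity
        have h1L := (hLrange n hn).1
        rw [hLrec n hn, haval]
        push_cast
        have hlog := hlog_diff_ge n hn
        have step : (1 - g/((n:ℝ)+1)^2) * L n + g/((n:ℝ)+1)^2 * ((n:ℝ)+1)
            ≤ L n + g / ((n:ℝ)+1) := by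
          have e : g/((n:ℝ)+1)^2 * ((n:ℝ)+1) = g / ((n:ℝ)+1) := by
            field_simp
          have hx : 0 ≤ g/((n:ℝ)+1)^2 * L n := mul_nonneg hann (by linarith)
          nlinarith
        have : g / ((n:ℝ)+1) ≤ g * (Real.log ((n:ℝ)+1) - Real.log n) := by
          have h' := mul_le_mul_of_nonneg_left hlog hg.le
          have h'' : g * (1/((n:ℝ)+1)) = g/((n:ℝ)+1) := by ring
          linarith
        calc (1 - g/((n:ℝ)+1)^2) * L n + g/((n:ℝ)+1)^2 * ((n:ℝ)+1)
            ≤ L n + g / ((n:ℝ)+1) := step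
          _ ≤ g * Real.log n + B + g * (Real.log ((n:ℝ)+1) - Real.log n) := by
              linarith [ih, this]
          _ = g * Real.log ((n:ℝ)+1) + B := by ring
      · -- a (n+1) = 1, so L (n+1) = n+1 ≤ sqrt g ≤ B
        have haval : a (n+1) = 1 := by
          rw [ha]
          push_cast
          exact min_eq_left (by rw [le_div_iff₀ hN2]; linarith)
        have hsq : (n:ℝ)+1 ≤ Real.sqrt g := by
          rw [show (n:ℝ)+1 = Real.sqrt (((n:ℝ)+1)^2) from (Real.sqrt_sq hN0.le).symm]
          exact Real.sqrt_le_sqrt hcase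
        rw [hLrec n hn, haval]
        push_cast
        have hlogN : 0 ≤ Real.log ((n:ℝ)+1) := Real.log_nonneg (by linarith)
        nlinarith
  -- lower bound
  have hlower : ∀ n : ℕ, 1 ≤ n →
      g * Real.log n - C + M / Real.sqrt n ≤ L n := by
    intro n hn
    induction n, hn using Nat.le_induction with
    | base =>
      rw [hL1]
      simp only [Nat.cast_one, Real.log_one, mul_zero, zero_sub, Real.sqrt_one, div_one]
      have : 0 ≤ g * Real.log (Real.sqrt g + 1) :=
        mul_nonneg hg.le (Real.log_nonneg (by linarith [Real.sqrt_nonneg g]))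
      rw [hC]
      linarith
    | succ n hn ih =>
      have hN0 : (0:ℝ) < (n:ℝ)+1 := by positivity
      have hN2 : (0:ℝ) < ((n:ℝ)+1)^2 := by positivity
      have hn0 : (0:ℝ) < n := by exact_mod_cast hn
      rcases le_total g (((n:ℝ)+1)^2) with hcase | hcase
      · have haval : a (n+1) = g / ((n:ℝ)+1)^2 := by
          rw [ha]
          push_cast
          exact min_eq_right (by rw [div_le_one hN2]; exact hcase)
        have hupp := hupper n hn
        have h1L := (hLrange n hn).1
        -- set s = sqrt n, t = sqrt (n+1)
        obtain ⟨s, hs⟩ : ∃ s : ℝ, s = Real.sqrt n := ⟨_, rfl⟩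
        obtain ⟨t, ht⟩ : ∃ t : ℝ, t = Real.sqrt ((n:ℝ)+1) := ⟨_, rfl⟩
        have hs1 : 1 ≤ s := hs ▸ Real.one_le_sqrt.mpr (by exact_mod_cast hn)
        have ht1 : 1 ≤ t := ht ▸ Real.one_le_sqrt.mpr (by linarith)
        have hs2 : s^2 = (n:ℝ) := hs ▸ Real.sq_sqrt hn0.le
        have ht2 : t^2 = (n:ℝ)+1 := ht ▸ Real.sq_sqrt hN0.le
        have hst : s ≤ t := by rw [hs, ht]; exact Real.sqrt_le_sqrt (by linarith)
        have hs0 : (0:ℝ) < s := by linarith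
        have ht0 : (0:ℝ) < t := by linarith
        -- key inequality
        have hkey : g/((n:ℝ)*((n:ℝ)+1)) + g*(g*Real.log n + B)/((n:ℝ)+1)^2
            ≤ M * (1/s - 1/t) := by
          have hlogn : Real.log (n:ℝ) ≤ 2*s := by
            have := hlog_le_sqrt n hn
            rw [hs]
            linarith
          have hkey0 := snap_aux_key g B M (Real.log (n:ℝ)) s t hg hB1 hM hs1 hst
            (by rw [ht2, hs2]) (hlog_nonneg n hn) hlogn
          rw [hs2, ht2] at hkey0
          exact hkey0
        rw [hLrec n hn, haval]
        push_cast
        have hlog_le := hlog_diff_le n hn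
        have expand : (1 - g/((n:ℝ)+1)^2) * L n + g/((n:ℝ)+1)^2 * ((n:ℝ)+1)
            = L n - g/((n:ℝ)+1)^2 * L n + g/((n:ℝ)+1) := by
          field_simp
        have hLub : g/((n:ℝ)+1)^2 * L n ≤ g/((n:ℝ)+1)^2 * (g*Real.log n + B) := by
          apply mul_le_mul_of_nonneg_left hupp (by positivity)
        have hLub' : g/((n:ℝ)+1)^2 * (g*Real.log n + B)
            = g*(g*Real.log n + B)/((n:ℝ)+1)^2 := by ring
        have hfr : g/((n:ℝ)*((n:ℝ)+1)) = g/(n:ℝ) - g/((n:ℝ)+1) := by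
          field_simp
          ring
        -- combine
        have goal2 : g * Real.log ((n:ℝ)+1) - C + M / t ≤
            L n - g/((n:ℝ)+1)^2 * L n + g/((n:ℝ)+1) := by
          have ihs : g * Real.log n - C + M / s ≤ L n := by
            rw [hs]; exact ih
          have hMst : M / s = M * (1/s) := by ring
          have hMt : M / t = M * (1/t) := by ring
          have hlg : g * (Real.log ((n:ℝ)+1) - Real.log n) ≤ g * (1/(n:ℝ)) :=
            mul_le_mul_of_nonneg_left hlog_le hg.le
          have hgn : g * (1/(n:ℝ)) = g / (n:ℝ) := by ring
          linarith [ihs, hLub, hLub', hfr, hkey, hMst, hMt, hlg, hgn]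
        rw [expand]
        have : M / Real.sqrt ((n:ℝ)+1) = M / t := by rw [ht]
        rw [this]
        exact goal2
      · have haval : a (n+1) = 1 := by
          rw [ha]
          push_cast
          exact min_eq_left (by rw [le_div_iff₀ hN2]; linarith)
        have hsq : (n:ℝ)+1 ≤ Real.sqrt g := by
          rw [show (n:ℝ)+1 = Real.sqrt (((n:ℝ)+1)^2) from (Real.sqrt_sq hN0.le).symm]
          exact Real.sqrt_le_sqrt hcase
        rw [hLrec n hn, haval]
        push_cast
        have hlogmono : Real.log ((n:ℝ)+1) ≤ Real.log (Real.sqrt g + 1) := by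
          apply Real.log_le_log (by linarith)
          linarith
        have htge : 1 ≤ Real.sqrt ((n:ℝ)+1) := Real.one_le_sqrt.mpr (by linarith)
        have hMdiv : M / Real.sqrt ((n:ℝ)+1) ≤ M := by
          rw [div_le_iff₀ (by linarith)]
          nlinarith
        rw [hC]
        nlinarith [mul_le_mul_of_nonneg_left hlogmono hg.le]
  -- conclude
  refine ⟨B + C, fun n hn => ?_⟩
  rw [abs_le]
  have h1 := hupper n hn
  have h2 := hlower n hn
  have hsn : 0 < Real.sqrt n := Real.sqrt_pos.mpr (by exact_mod_cast hn)
  have hMs : 0 ≤ M / Real.sqrt n := by positivity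
  rw [hL] at h1 h2
  constructor
  · linarith
  · linarith
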